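/- arXiv:1112.6250 — 4 statements merged into one kernel-verified Lean document; each statement's English description precedes it below -/
import Mathlib

section
/- Let p be an odd prime and s ≥ 1, and let G₀ = Γ₀(pˢ)/Γ(pˢ). Then G₀/(G₀'G₀²) is cyclic of order 2. -/
open CongruenceSubgroup
open scoped MatrixGroups

instance (N : ℕ) : (Gamma N).Normal := Gamma_normal N

/-!
The lower-right entry `d mod N` defines a surjective homomorphism `Γ₀(N)/Γ(N) → (ℤ/N)ˣ`. A class in
its kernel has the same reduction mod `N` as `Tᵇ` (`b` the upper-right entry), so when `2` is
invertible mod `N` it is the square of the class of `T^(b/2)`. Hence `G₀'G₀²` is the preimage of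
the squares of `(ℤ/N)ˣ`, which have index `2` for `N = pˢ > 2` with `p` odd, as this unit group is
cyclic of even order `φ(pˢ)`.
-/

namespace Subgroup

theorem index_commutator_sup_closure_sq_eq {G A : Type*} [Group G] [CommGroup A] (f : G →* A)
    (hf : Function.Surjective f) (hker : ∀ x, f x = 1 → ∃ w, x = w ^ 2) :
    (_root_.commutator G ⊔ closure {x : G | ∃ g, x = g ^ 2}).index =
      (powMonoidHom 2 : A →* A).range.index := by
  suffices _root_.commutator G ⊔ closure {x : G | ∃ g, x = g ^ 2} =
      (powMonoidHom 2 : A →* A).range.comap f by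
    rw [this, index_comap_of_surjective _ hf]
  apply le_antisymm
  · refine sup_le ((Abelianization.commutator_subset_ker f).trans fun x hx => ?_) ?_
    · exact ⟨1, by simpa using hx.symm⟩
    · rw [closure_le]
      rintro _ ⟨g, rfl⟩
      exact ⟨f g, by simp⟩
  · rintro x ⟨a, ha⟩
    obtain ⟨y, rfl⟩ := hf a
    obtain ⟨w, hw⟩ := hker (x * (y ^ 2)⁻¹) (by simp [← ha])
    rw [mul_inv_eq_iff_eq_mul] at hw
    rw [hw]
    exact mul_mem (mem_sup_right (subset_closure ⟨w, rfl⟩))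
      (mem_sup_right (subset_closure ⟨y, rfl⟩))

end Subgroup

theorem IsCyclic.index_range_powMonoidHom_two {G : Type*} [CommGroup G] [IsCyclic G] [Finite G]
    (h : Even (Nat.card G)) : (powMonoidHom 2 : G →* G).range.index = 2 := by
  rw [IsCyclic.index_powMonoidHom_range, Nat.gcd_eq_right (even_iff_two_dvd.mp h)]

namespace CongruenceSubgroup

local notation "𝒢₀(" N ")" => Gamma0 N ⧸ Subgroup.subgroupOf (Gamma N) (Gamma0 N)

variable {N : ℕ}

theorem Gamma0Map_toHomUnits_surjective : Function.Surjective (Gamma0Map N).toHomUnits := by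
  intro u
  obtain ⟨a, ha⟩ := ZMod.intCast_surjective ((u⁻¹ : (ZMod N)ˣ) : ZMod N)
  obtain ⟨d, hd⟩ := ZMod.intCast_surjective (u : ZMod N)
  obtain ⟨k, hk⟩ : (N : ℤ) ∣ a * d - 1 := by
    rw [← ZMod.intCast_zmod_eq_zero_iff_dvd]
    push_cast
    rw [ha, hd, Units.inv_mul, sub_self]
  have hdet : (!![a, k; (N : ℤ), d]).det = 1 := by
    rw [Matrix.det_fin_two_of]
    linarith
  exact ⟨⟨⟨!![a, k; (N : ℤ), d], hdet⟩, Gamma0_mem.mpr (by simp)⟩,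
    Units.ext (by simpa [Gamma0Map] using hd)⟩

theorem Gamma_subgroupOf_le_ker_toHomUnits :
    (Gamma N).subgroupOf (Gamma0 N) ≤ (Gamma0Map N).toHomUnits.ker := by
  intro γ hγ
  rw [Subgroup.mem_subgroupOf, Gamma_mem] at hγ
  exact Units.ext hγ.2.2.2

def lowerRightUnit (N : ℕ) : 𝒢₀(N) →* (ZMod N)ˣ :=
  QuotientGroup.lift _ _ Gamma_subgroupOf_le_ker_toHomUnits

theorem lowerRightUnit_surjective : Function.Surjective (lowerRightUnit N) :=
  (QuotientGroup.lift_surjective_of_surjective _ _ Gamma0Map_toHomUnits_surjective _)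

theorem T_zpow_mem_Gamma0 (n : ℤ) : ModularGroup.T ^ n ∈ Gamma0 N := by
  simp [ModularGroup.coe_T_zpow]

theorem exists_sq_of_mem_Gamma1' (h2 : IsUnit (2 : ZMod N)) {γ : Gamma0 N}
    (hγ : γ ∈ Gamma1' N) :
    ∃ w : Gamma0 N, (γ : 𝒢₀(N)) = (w : 𝒢₀(N)) ^ 2 := by
  obtain ⟨ha, hd, hc⟩ := (Gamma1_to_Gamma0_mem γ).mp hγ
  obtain ⟨n, hn⟩ := ZMod.intCast_surjective
    (((h2.unit⁻¹ : (ZMod N)ˣ) : ZMod N) * ((γ : SL(2, ℤ)) 0 1 : ZMod N))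
  have h2n : ((γ : SL(2, ℤ)) 0 1 : ZMod N) = n * 2 := by
    rw [hn, mul_right_comm, h2.val_inv_mul, one_mul]
  refine ⟨⟨_, T_zpow_mem_Gamma0 n⟩, ?_⟩
  rw [← QuotientGroup.mk_pow, QuotientGroup.eq, Subgroup.mem_subgroupOf, Subgroup.coe_mul,
    Subgroup.coe_inv, Subgroup.coe_pow, ← zpow_natCast, ← zpow_mul, Gamma_mem', map_mul, map_inv,
    inv_mul_eq_one]
  ext i j
  fin_cases i <;> fin_cases j <;> simp [-map_zpow, ModularGroup.coe_T_zpow, ha, hd, hc, h2n]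

theorem exists_sq_of_lowerRightUnit_eq_one (h2 : IsUnit (2 : ZMod N)) (x : 𝒢₀(N))
    (hx : lowerRightUnit N x = 1) : ∃ w, x = w ^ 2 := by
  obtain ⟨γ, rfl⟩ := QuotientGroup.mk_surjective x
  obtain ⟨w, hw⟩ := exists_sq_of_mem_Gamma1' h2 (Units.ext_iff.mp hx)
  exact ⟨w, hw⟩

end CongruenceSubgroup

/-- For `p` an odd prime and `s ≥ 1`, with `G₀ = Γ₀(pˢ)/Γ(pˢ)`, the quotient
`G₀/(G₀'G₀²)` is cyclic of order 2; equivalently, the subgroup `G₀'G₀²` generated by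
all commutators and squares has index 2 in `G₀`. -/
theorem stmt_10 (p : ℕ) (hp : p.Prime) (hodd : Odd p) (s : ℕ) (hs : 1 ≤ s) :
    (commutator (Gamma0 (p ^ s) ⧸ (Gamma (p ^ s)).subgroupOf (Gamma0 (p ^ s))) ⊔
      Subgroup.closure
        {x : Gamma0 (p ^ s) ⧸ (Gamma (p ^ s)).subgroupOf (Gamma0 (p ^ s)) |
          ∃ g, x = g ^ 2}).index = 2 := by
  have hp2 : p ≠ 2 := by rintro rfl; exact absurd hodd (by decide)
  have hN : 2 < p ^ s := lt_of_lt_of_le (lt_of_le_of_ne hp.two_le hp2.symm)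
    (Nat.le_self_pow (by omega) p)
  have h2 : IsUnit (2 : ZMod (p ^ s)) := by
    simpa using (ZMod.isUnit_iff_coprime 2 (p ^ s)).mpr
      ((Nat.coprime_two_left.mpr hodd).pow_right s)
  have : NeZero (p ^ s) := ⟨by omega⟩
  have := ZMod.isCyclic_units_of_prime_pow p hp hp2 s
  rw [Subgroup.index_commutator_sup_closure_sq_eq _ lowerRightUnit_surjective
    (exists_sq_of_lowerRightUnit_eq_one h2)]
  refine IsCyclic.index_range_powMonoidHom_two ?_
  rw [Nat.card_eq_fintype_card, ZMod.card_units_eq_totient]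
  exact Nat.totient_even hN
end

section
/- Let p be an odd prime and s ≥ 1, and let G₀ = Γ₀(pˢ)/Γ(pˢ). The image of -I in G₀ lies in G₀'G₀² if and only if p ≡ 1 (mod 4). -/
/-!
The lower-right entry gives a homomorphism from `Γ₀(N)/Γ(N)` to the abelian group `(ℤ/N)ˣ`,
so it maps `G₀'G₀²` into the squares, and `-I` lies there only if `-1` is a square mod `N`.
Conversely, if `a ^ 2 + 1 = N m`, then `!![a, 1; -N m, -a] ∈ Γ₀(N)` squares to `-I`.
For `N = pˢ` with `p` odd, `-1` is a square mod `pˢ` iff it is one mod `p` (Hensel),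
i.e. iff `p ≡ 1 (mod 4)`.
-/
open CongruenceSubgroup
open scoped MatrixGroups

open Polynomial in
theorem PadicInt.isSquare_neg_one {p : ℕ} [Fact p.Prime] (hp4 : p % 4 = 1) :
    IsSquare (-1 : ℤ_[p]) := by
  obtain ⟨b, hb⟩ := ZMod.exists_sq_eq_neg_one_iff.mpr (by omega : p % 4 ≠ 3)
  obtain ⟨a, rfl⟩ := ZMod.intCast_surjective b
  have hdvd : (p : ℤ) ∣ a ^ 2 + 1 := by
    rw [← ZMod.intCast_zmod_eq_zero_iff_dvd]
    push_cast
    linear_combination -hb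
  have hndvd : ¬ (p : ℤ) ∣ 2 * a := by
    rw [← ZMod.intCast_zmod_eq_zero_iff_dvd]
    push_cast
    refine mul_ne_zero (Ring.two_ne_zero (by rw [ZMod.ringChar_zmod_n]; omega)) fun ha => ?_
    simp [ha] at hb
  have hval : ‖((a ^ 2 + 1 : ℤ) : ℤ_[p])‖ < 1 := (norm_int_lt_one_iff_dvd _).mpr hdvd
  have hderiv : ‖((2 * a : ℤ) : ℤ_[p])‖ = 1 :=
    le_antisymm (norm_le_one _) (not_lt.mp ((norm_int_lt_one_iff_dvd _).not.mpr hndvd))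
  obtain ⟨z, hz, -⟩ := hensels_lemma (F := (X ^ 2 + 1 : ℤ[X])) (a := (a : ℤ_[p])) (by
    push_cast at hval hderiv
    simpa [hderiv, map_ofNat] using hval)
  simp only [map_add, map_pow, aeval_X, map_one] at hz
  exact ⟨z, by linear_combination -hz⟩

theorem ZMod.isSquare_neg_one_prime_pow_iff {p : ℕ} [Fact p.Prime] (hodd : Odd p) {s : ℕ}
    (hs : s ≠ 0) : IsSquare (-1 : ZMod (p ^ s)) ↔ p % 4 = 1 := by
  refine ⟨fun h => ?_, fun h => ?_⟩
  · have := ZMod.exists_sq_eq_neg_one_iff.mp (ZMod.isSquare_neg_one_of_dvd (dvd_pow_self p hs) h)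
    have := Nat.odd_iff.mp hodd
    omega
  · simpa using (PadicInt.isSquare_neg_one h).map (PadicInt.toZModPow s)

theorem commutator_sup_closure_sq_le_comap {G A : Type*} [Group G] [CommGroup A] (f : G →* A) :
    commutator G ⊔ Subgroup.closure {x : G | ∃ g, x = g ^ 2} ≤
      (powMonoidHom 2 : A →* A).range.comap f :=
  sup_le ((Abelianization.commutator_subset_ker f).trans fun _ hx => ⟨1, by simpa using hx.symm⟩)
    ((Subgroup.closure_le _).mpr fun _ ⟨g, hg⟩ => ⟨f g, by simp [hg]⟩)

namespace CongruenceSubgroup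

variable (N : ℕ)

local notation "G₀(" N ")" => Gamma0 N ⧸ Subgroup.subgroupOf (Gamma N) (Gamma0 N)

def Gamma0QuotGammaToUnits : G₀(N) →* (ZMod N)ˣ :=
  QuotientGroup.lift _ (Gamma0Map N).toHomUnits fun _ hg => Units.ext (Gamma_mem.mp hg).2.2.2

theorem Gamma0QuotGammaToUnits_mk (g : Gamma0 N) :
    (Gamma0QuotGammaToUnits N g : ZMod N) = ((g : SL(2, ℤ)) 1 1 : ZMod N) :=
  rfl

variable {N} in
theorem exists_mem_Gamma0_sq_eq_neg_one (h : IsSquare (-1 : ZMod N)) :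
    ∃ A ∈ Gamma0 N, A ^ 2 = -1 := by
  obtain ⟨b, hb⟩ := h
  obtain ⟨a, rfl⟩ := ZMod.intCast_surjective b
  obtain ⟨m, hm⟩ : (N : ℤ) ∣ a ^ 2 + 1 := by
    rw [← ZMod.intCast_zmod_eq_zero_iff_dvd]
    push_cast
    linear_combination -hb
  have hdet : (!![a, 1; -(N * m), -a] : Matrix (Fin 2) (Fin 2) ℤ).det = 1 := by
    rw [Matrix.det_fin_two_of]
    linear_combination -hm
  let A : SL(2, ℤ) := ⟨_, hdet⟩
  have hA : (A : Matrix (Fin 2) (Fin 2) ℤ) = !![a, 1; -(N * m), -a] := rfl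
  refine ⟨A, by simp [hA], Subtype.ext ?_⟩
  rw [Matrix.SpecialLinearGroup.coe_pow, Matrix.SpecialLinearGroup.coe_neg,
    Matrix.SpecialLinearGroup.coe_one, hA, sq, Matrix.mul_fin_two, Matrix.one_fin_two]
  simp only [Matrix.neg_of, Matrix.neg_cons, neg_zero, Matrix.neg_empty]
  congr 5 <;> linarith

theorem mk_neg_one_mem_commutator_sup_closure_sq_iff (hneg : (-1 : SL(2, ℤ)) ∈ Gamma0 N) :
    ((QuotientGroup.mk (⟨-1, hneg⟩ : Gamma0 N) : G₀(N)) ∈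
      commutator G₀(N) ⊔ Subgroup.closure {x : G₀(N) | ∃ g, x = g ^ 2}) ↔
      IsSquare (-1 : ZMod N) := by
  constructor
  · intro h
    obtain ⟨u, hu⟩ := commutator_sup_closure_sq_le_comap (Gamma0QuotGammaToUnits N) h
    exact ⟨u, by simpa [Gamma0QuotGammaToUnits_mk, sq, eq_comm] using congrArg Units.val hu⟩
  · intro h
    obtain ⟨A, hA, hA2⟩ := exists_mem_Gamma0_sq_eq_neg_one h
    refine Subgroup.mem_sup_right (Subgroup.subset_closure ⟨(⟨A, hA⟩ : Gamma0 N), ?_⟩)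
    rw [← QuotientGroup.mk_pow]
    exact congrArg _ (Subtype.ext hA2.symm)

end CongruenceSubgroup

/-- For `p` an odd prime and `s ≥ 1`, with `G₀ = Γ₀(pˢ)/Γ(pˢ)`, the image of `-I` in `G₀`
lies in `G₀'G₀²` if and only if `p ≡ 1 (mod 4)`. -/
theorem stmt_11 (p : ℕ) (hp : p.Prime) (hodd : Odd p) (s : ℕ) (hs : 1 ≤ s)
    (hneg : (-1 : SL(2, ℤ)) ∈ Gamma0 (p ^ s)) :
    ((QuotientGroup.mk (⟨-1, hneg⟩ : Gamma0 (p ^ s)) :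
        Gamma0 (p ^ s) ⧸ (Gamma (p ^ s)).subgroupOf (Gamma0 (p ^ s))) ∈
      commutator (Gamma0 (p ^ s) ⧸ (Gamma (p ^ s)).subgroupOf (Gamma0 (p ^ s))) ⊔
        Subgroup.closure
          {x : Gamma0 (p ^ s) ⧸ (Gamma (p ^ s)).subgroupOf (Gamma0 (p ^ s)) |
            ∃ g, x = g ^ 2}) ↔ p % 4 = 1 := by
  have := Fact.mk hp
  rw [mk_neg_one_mem_commutator_sup_closure_sq_iff,
    ZMod.isSquare_neg_one_prime_pow_iff hodd (by omega)]
end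

section
/- Let s ≥ 1 and G₁ := Γ₁(2ˢ)/Γ(2^{s+1}). Then G₁/(G₁'G₁²) is isomorphic to (ℤ/2)². Moreover the image of -I lies in G₁'G₁² if and only if s = 1. -/
open CongruenceSubgroup
open scoped MatrixGroups

/-!
Put `N = 2ˢ` (any even `N ≠ 0` works). Sending `A = [[a, b], [c, d]] ∈ Γ₁(N)` to
`(b mod 2, c/N mod 2)` is a homomorphism onto `(ℤ/2)²` that kills `Γ(2N)`, so `G₁'G₁²` lies in
its kernel. Conversely, modulo `2N` an element of the kernel is `[[a, b], [0, a]]` with `b` even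
and `a ∈ {1, 1 + N}`, hence equals `T^b` or `T^b β`, where `β = [T, L] T^N` with
`L = [[1, 0], [N, 1]]` is `≡ (1 + N) I`; both lie in `G₁'G₁²`. Finally `-I ∈ Γ₁(N)` iff `N ∣ 2`,
and then `-I` is in the kernel.
-/

open Matrix ModularGroup
open scoped commutatorElement

lemma ZMod.intCast_eq_intCast_of_dvd {M N : ℕ} (h : M ∣ N) {a b : ℤ}
    (hab : (a : ZMod N) = b) : (a : ZMod M) = b := by
  rw [ZMod.intCast_eq_intCast_iff] at hab ⊢
  exact hab.of_dvd (Int.natCast_dvd_natCast.mpr h)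

lemma Int.cast_eq_one_or_eq_one_add_of_modEq {N : ℕ} {a : ℤ} (h : a ≡ 1 [ZMOD N]) :
    (a : ZMod (N * 2)) = 1 ∨ (a : ZMod (N * 2)) = 1 + N := by
  obtain ⟨k, hk⟩ := Int.modEq_iff_dvd.mp h.symm
  have hN2 : (N : ZMod (N * 2)) * 2 = 0 := by exact_mod_cast ZMod.natCast_self (N * 2)
  have ha : (a : ZMod (N * 2)) = 1 + N * k := by
    rw [show a = 1 + N * k by linarith]; push_cast; ring
  rcases Int.even_or_odd k with ⟨m, rfl⟩ | ⟨m, rfl⟩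
  · left; push_cast at ha; linear_combination ha + (m : ZMod (N * 2)) * hN2
  · right; push_cast at ha; linear_combination ha + (m : ZMod (N * 2)) * hN2

section commutatorSquares

variable (G : Type*) [Group G]

def commutatorSquares : Subgroup G :=
  commutator G ⊔ Subgroup.closure {x | ∃ g, x = g ^ 2}

variable {G}

lemma sq_mem_commutatorSquares (g : G) : g ^ 2 ∈ commutatorSquares G :=
  Subgroup.mem_sup_right (Subgroup.subset_closure ⟨g, rfl⟩)

lemma commutatorElement_mem_commutatorSquares (g h : G) : ⁅g, h⁆ ∈ commutatorSquares G :=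
  Subgroup.mem_sup_left (Subgroup.commutator_mem_commutator (Subgroup.mem_top g)
    (Subgroup.mem_top h))

lemma zpow_two_mul_mem_commutatorSquares (g : G) (k : ℤ) :
    g ^ (2 * k) ∈ commutatorSquares G := by
  rw [mul_comm, _root_.zpow_mul, zpow_two, ← sq]
  exact sq_mem_commutatorSquares _

lemma commutatorSquares_le_ker {H : Type*} [CommGroup H] (hH : ∀ h : H, h ^ 2 = 1)
    (f : G →* H) : commutatorSquares G ≤ f.ker := by
  refine sup_le ?_ ((Subgroup.closure_le _).mpr ?_)
  · rw [commutator_def, Subgroup.commutator_le]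
    intro x _ y _
    rw [MonoidHom.mem_ker, map_commutatorElement, commutatorElement_eq_one_iff_commute]
    exact Commute.all _ _
  · rintro _ ⟨g, rfl⟩
    simp [hH]

end commutatorSquares

namespace CongruenceSubgroup

variable {N : ℕ}

lemma dvd_apply_one_zero_of_mem_Gamma1 {A : SL(2, ℤ)} (hA : A ∈ Gamma1 N) :
    (N : ℤ) ∣ A 1 0 :=
  (ZMod.intCast_zmod_eq_zero_iff_dvd _ _).mp ((Gamma1_mem N A).mp hA).2.2

lemma diag_zmod_two_eq_one_of_mem_Gamma1 (hN : 2 ∣ N) {A : SL(2, ℤ)} (hA : A ∈ Gamma1 N) :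
    (A 0 0 : ZMod 2) = 1 ∧ (A 1 1 : ZMod 2) = 1 := by
  obtain ⟨h00, h11, -⟩ := (Gamma1_mem N A).mp hA
  exact ⟨by exact_mod_cast ZMod.intCast_eq_intCast_of_dvd hN (b := 1) (by exact_mod_cast h00),
    by exact_mod_cast ZMod.intCast_eq_intCast_of_dvd hN (b := 1) (by exact_mod_cast h11)⟩

lemma neg_one_mem_Gamma1_iff : (-1 : SL(2, ℤ)) ∈ Gamma1 N ↔ N ∣ 2 := by
  have h := ZMod.intCast_eq_intCast_iff_dvd_sub (-1) 1 N
  push_cast at h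
  simpa [Gamma1_mem, h] using Int.natCast_dvd_natCast (n := 2)

def offDiagParity (N : ℕ) [NeZero N] (hN : 2 ∣ N) :
    Gamma1 N →* Multiplicative (ZMod 2 × ZMod 2) where
  toFun A := .ofAdd ((A : SL(2, ℤ)) 0 1, (((A : SL(2, ℤ)) 1 0 / N : ℤ) : ZMod 2))
  map_one' := by simp
  map_mul' A B := by
    have hmul (i j : Fin 2) : ((A * B : Gamma1 N) : SL(2, ℤ)) i j =
        (A : SL(2, ℤ)) i 0 * (B : SL(2, ℤ)) 0 j +
          (A : SL(2, ℤ)) i 1 * (B : SL(2, ℤ)) 1 j := by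
      simp [mul_apply, Fin.sum_univ_two]
    obtain ⟨cA, hcA⟩ := dvd_apply_one_zero_of_mem_Gamma1 A.2
    obtain ⟨cB, hcB⟩ := dvd_apply_one_zero_of_mem_Gamma1 B.2
    obtain ⟨hA00, hA11⟩ := diag_zmod_two_eq_one_of_mem_Gamma1 hN A.2
    obtain ⟨hB00, hB11⟩ := diag_zmod_two_eq_one_of_mem_Gamma1 hN B.2
    have hN0 : (N : ℤ) ≠ 0 := by exact_mod_cast NeZero.ne N
    have hc : ((A * B : Gamma1 N) : SL(2, ℤ)) 1 0 =
        N * (cA * (B : SL(2, ℤ)) 0 0 + (A : SL(2, ℤ)) 1 1 * cB) := by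
      rw [hmul, hcA, hcB]; ring
    rw [← ofAdd_add, Prod.mk_add_mk, hc, hcA, hcB, Int.mul_ediv_cancel_left _ hN0,
      Int.mul_ediv_cancel_left _ hN0, Int.mul_ediv_cancel_left _ hN0, hmul]
    push_cast
    simp only [hA00, hA11, hB00, hB11, one_mul, mul_one, add_comm]

lemma offDiagParity_apply [NeZero N] (hN : 2 ∣ N) (A : Gamma1 N) :
    offDiagParity N hN A =
      .ofAdd ((A : SL(2, ℤ)) 0 1, (((A : SL(2, ℤ)) 1 0 / N : ℤ) : ZMod 2)) :=
  rfl

lemma subgroupOf_Gamma_le_ker_offDiagParity [NeZero N] (hN : 2 ∣ N) :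
    (Gamma (N * 2)).subgroupOf (Gamma1 N) ≤ (offDiagParity N hN).ker := by
  intro A hA
  obtain ⟨-, hb, hc, -⟩ := Gamma_mem.mp (Subgroup.mem_subgroupOf.mp hA)
  obtain ⟨c, hc⟩ := (ZMod.intCast_zmod_eq_zero_iff_dvd _ _).mp hc
  have hN0 : (N : ℤ) ≠ 0 := by exact_mod_cast NeZero.ne N
  have hb2 : ((A : SL(2, ℤ)) 0 1 : ZMod 2) = 0 := by
    exact_mod_cast
      ZMod.intCast_eq_intCast_of_dvd (dvd_mul_left 2 N) (b := 0) (by exact_mod_cast hb)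
  have hc2 : (A : SL(2, ℤ)) 1 0 / N = 2 * c := by
    rw [hc, Nat.cast_mul, mul_assoc, Int.mul_ediv_cancel_left _ hN0]; rfl
  rw [MonoidHom.mem_ker, offDiagParity_apply, hb2, hc2, Int.cast_mul, Int.cast_two,
    show (2 : ZMod 2) = 0 from rfl, zero_mul]
  rfl

abbrev Gamma1ModGamma (N : ℕ) : Type := Gamma1 N ⧸ (Gamma (N * 2)).subgroupOf (Gamma1 N)

def offDiagParityQuot (N : ℕ) [NeZero N] (hN : 2 ∣ N) :
    Gamma1ModGamma N →* Multiplicative (ZMod 2 × ZMod 2) :=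
  QuotientGroup.lift _ (offDiagParity N hN) (subgroupOf_Gamma_le_ker_offDiagParity hN)

lemma mk_eq_mk_of_intCast_apply_eq {H : Subgroup SL(2, ℤ)} {M : ℕ} {A B : H}
    (h : ∀ i j, (((A : SL(2, ℤ)) i j : ℤ) : ZMod M) = ((B : SL(2, ℤ)) i j : ZMod M)) :
    (A : H ⧸ (Gamma M).subgroupOf H) = B := by
  rw [QuotientGroup.eq, Subgroup.mem_subgroupOf, Gamma_mem', Subgroup.coe_mul, Subgroup.coe_inv,
    map_mul, map_inv, inv_mul_eq_one]
  ext i j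
  simp [SL_reduction_mod_hom_val, h]

def upperT (N : ℕ) : Gamma1 N := ⟨T, (Gamma1_mem _ _).mpr (by simp [T])⟩

def lowerT (N : ℕ) : Gamma1 N :=
  ⟨⟨!![1, 0; (N : ℤ), 1], by simp [det_fin_two_of]⟩, (Gamma1_mem _ _).mpr (by simp)⟩

def scalarLift (N : ℕ) : Gamma1 N := ⁅upperT N, lowerT N⁆ * upperT N ^ (N : ℤ)

@[simp]
lemma coe_upperT : (upperT N : SL(2, ℤ)) = T := rfl

lemma coe_scalarLift : ((scalarLift N : SL(2, ℤ)) : Matrix (Fin 2) (Fin 2) ℤ) =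
    !![(1 + N + N ^ 2 : ℤ), N ^ 2 + N ^ 3; (N ^ 2 : ℤ), 1 - N + N ^ 3] := by
  have hL : ((lowerT N : SL(2, ℤ)) : Matrix (Fin 2) (Fin 2) ℤ) = !![1, 0; (N : ℤ), 1] := rfl
  have hLinv : (((lowerT N : SL(2, ℤ))⁻¹ : SL(2, ℤ)) : Matrix (Fin 2) (Fin 2) ℤ) =
      !![1, 0; -(N : ℤ), 1] := by
    change adjugate !![1, 0; (N : ℤ), 1] = _
    simp [adjugate_fin_two_of]
  have hβ : (scalarLift N : SL(2, ℤ)) =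
      T * lowerT N * T⁻¹ * (lowerT N)⁻¹ * T ^ (N : ℤ) := by
    simp [scalarLift, commutatorElement_def, upperT]
  rw [hβ]
  change (T : Matrix (Fin 2) (Fin 2) ℤ) * (lowerT N : SL(2, ℤ)) * (T⁻¹ : SL(2, ℤ)) *
    ((lowerT N : SL(2, ℤ))⁻¹ : SL(2, ℤ)) * (T ^ (N : ℤ) : SL(2, ℤ)) = _
  rw [hL, hLinv, coe_T, coe_T_inv, coe_T_zpow]
  ext i j
  fin_cases i <;> fin_cases j <;> simp [mul_apply, Fin.sum_univ_two] <;> ring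

lemma natCast_mul_self_eq_zero (hN : 2 ∣ N) : (N : ZMod (N * 2)) * N = 0 := by
  obtain ⟨m, rfl⟩ := hN
  rw [← Nat.cast_mul, show 2 * m * (2 * m) = 2 * m * 2 * m by ring, Nat.cast_mul,
    ZMod.natCast_self, zero_mul]

lemma intCast_apply_one_one_eq {R : Type*} [CommRing R] (A : SL(2, ℤ))
    (hc : (A 1 0 : R) = 0) (ha : (A 0 0 : R) * A 0 0 = 1) : (A 1 1 : R) = A 0 0 := by
  have hdet := congrArg (Int.cast : ℤ → R) A.det_coe
  rw [det_fin_two] at hdet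
  push_cast at hdet
  rw [hc] at hdet
  linear_combination (A 0 0 : R) * hdet - (A 1 1 : R) * ha

lemma mk_eq_of_offDiagParity_eq_one [NeZero N] (hN : 2 ∣ N) {A : Gamma1 N}
    (hA : offDiagParity N hN A = 1) :
    ∃ k : ℤ, (A : Gamma1ModGamma N) = ↑(upperT N ^ (2 * k)) ∨
      (A : Gamma1ModGamma N) = ↑(upperT N ^ (2 * k) * scalarLift N) := by
  have hN2 : (N : ZMod (N * 2)) * 2 = 0 := by exact_mod_cast ZMod.natCast_self (N * 2)
  have hNN := natCast_mul_self_eq_zero hN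
  have hN0 : (N : ℤ) ≠ 0 := by exact_mod_cast NeZero.ne N
  rw [offDiagParity_apply, ofAdd_eq_one, Prod.ext_iff] at hA
  obtain ⟨b, hb⟩ : (2 : ℤ) ∣ (A : SL(2, ℤ)) 0 1 :=
    (ZMod.intCast_zmod_eq_zero_iff_dvd _ 2).mp hA.1
  have hc : ((A : SL(2, ℤ)) 1 0 : ZMod (N * 2)) = 0 := by
    obtain ⟨c, hc⟩ := dvd_apply_one_zero_of_mem_Gamma1 A.2
    rw [hc, Int.mul_ediv_cancel_left _ hN0] at hA
    obtain ⟨c', rfl⟩ := (ZMod.intCast_zmod_eq_zero_iff_dvd _ 2).mp hA.2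
    rw [hc]; push_cast; linear_combination (c' : ZMod (N * 2)) * hN2
  have ha := Int.cast_eq_one_or_eq_one_add_of_modEq
    ((ZMod.intCast_eq_intCast_iff _ 1 N).mp (by simpa using ((Gamma1_mem N A).mp A.2).1))
  have hd : ((A : SL(2, ℤ)) 1 1 : ZMod (N * 2)) = (A : SL(2, ℤ)) 0 0 := by
    refine intCast_apply_one_one_eq _ hc ?_
    rcases ha with ha | ha <;> rw [ha]
    · ring
    · linear_combination hN2 + hNN
  refine ⟨b, ha.imp (fun ha => mk_eq_mk_of_intCast_apply_eq ?_)
    (fun ha => mk_eq_mk_of_intCast_apply_eq ?_)⟩ <;> intro i j <;> fin_cases i <;> fin_cases j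
  all_goals simp [coe_T_zpow, ha, hb, hc, hd, coe_scalarLift, mul_apply, Fin.sum_univ_two]
  · linear_combination -(1 + 2 * (b : ZMod (N * 2))) * hNN
  · linear_combination -(1 + N + 2 * (b : ZMod (N * 2)) * N) * hNN + (b : ZMod (N * 2)) * hN2
  · linear_combination -hNN
  · linear_combination hN2 - (N : ZMod (N * 2)) * hNN

lemma mk_scalarLift_mem_commutatorSquares (hN : 2 ∣ N) :
    ((scalarLift N : Gamma1 N) : Gamma1ModGamma N) ∈ commutatorSquares (Gamma1ModGamma N) := by
  obtain ⟨m, rfl⟩ := hN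
  have h : ((scalarLift (2 * m) : Gamma1 (2 * m)) : Gamma1ModGamma (2 * m)) =
      ⁅(upperT (2 * m) : Gamma1ModGamma (2 * m)), (lowerT (2 * m) : Gamma1ModGamma (2 * m))⁆ *
        (upperT (2 * m) : Gamma1ModGamma (2 * m)) ^ (2 * (m : ℤ)) := by
    simp [scalarLift, commutatorElement_def]
  rw [h]
  exact mul_mem (commutatorElement_mem_commutatorSquares _ _)
    (zpow_two_mul_mem_commutatorSquares _ _)

lemma commutatorSquares_eq_ker [NeZero N] (hN : 2 ∣ N) :
    commutatorSquares (Gamma1ModGamma N) = (offDiagParityQuot N hN).ker := by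
  refine le_antisymm (commutatorSquares_le_ker (by decide) _) fun x hx => ?_
  obtain ⟨A, rfl⟩ := QuotientGroup.mk_surjective x
  obtain ⟨k, hA | hA⟩ := mk_eq_of_offDiagParity_eq_one hN hx
  · rw [hA, QuotientGroup.mk_zpow]
    exact zpow_two_mul_mem_commutatorSquares _ _
  · rw [hA, QuotientGroup.mk_mul, QuotientGroup.mk_zpow]
    exact mul_mem (zpow_two_mul_mem_commutatorSquares _ _)
      (mk_scalarLift_mem_commutatorSquares hN)

lemma offDiagParityQuot_surjective [NeZero N] (hN : 2 ∣ N) :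
    Function.Surjective (offDiagParityQuot N hN) := by
  have ht : offDiagParityQuot N hN (upperT N) = .ofAdd (1, 0) := by
    simp [offDiagParityQuot, offDiagParity_apply, T]
  have hl : offDiagParityQuot N hN (lowerT N) = .ofAdd (0, 1) := by
    simp [offDiagParityQuot, offDiagParity_apply, lowerT, NeZero.ne N]
  have hgen : ∀ z : Multiplicative (ZMod 2 × ZMod 2), z = 1 ∨ z = .ofAdd (1, 0) ∨
      z = .ofAdd (0, 1) ∨ z = .ofAdd (1, 0) * .ofAdd (0, 1) := by decide
  intro z
  rcases hgen z with rfl | rfl | rfl | rfl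
  exacts [⟨1, map_one _⟩, ⟨_, ht⟩, ⟨_, hl⟩,
    ⟨(upperT N : Gamma1ModGamma N) * lowerT N, by rw [map_mul, ht, hl]⟩]

lemma index_commutatorSquares [NeZero N] (hN : 2 ∣ N) :
    (commutatorSquares (Gamma1ModGamma N)).index = 4 := by
  rw [commutatorSquares_eq_ker hN, Subgroup.index_ker,
    MonoidHom.range_eq_top.mpr (offDiagParityQuot_surjective hN), Subgroup.card_top,
    Nat.card_eq_fintype_card]
  rfl

lemma mk_neg_one_mem_commutatorSquares [NeZero N] (hN : 2 ∣ N)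
    (h : (-1 : SL(2, ℤ)) ∈ Gamma1 N) :
    ((⟨-1, h⟩ : Gamma1 N) : Gamma1ModGamma N) ∈ commutatorSquares (Gamma1ModGamma N) := by
  rw [commutatorSquares_eq_ker hN]
  simp [offDiagParityQuot, offDiagParity_apply]

end CongruenceSubgroup

/-- For `s ≥ 1` and `G₁ = Γ₁(2ˢ)/Γ(2^{s+1})`, the quotient `G₁/(G₁'G₁²)` is isomorphic to
`(ℤ/2)²` (i.e. `G₁'G₁²` has index 4 and the quotient is elementary abelian), and the image
of `-I` lies in `G₁'G₁²` if and only if `s = 1`. -/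
theorem stmt_17 (s : ℕ) (hs : 1 ≤ s)
    (S : Subgroup (Gamma1 (2 ^ s) ⧸ (Gamma (2 ^ (s + 1))).subgroupOf (Gamma1 (2 ^ s))))
    (hS : S = commutator (Gamma1 (2 ^ s) ⧸ (Gamma (2 ^ (s + 1))).subgroupOf (Gamma1 (2 ^ s))) ⊔
      Subgroup.closure
        {x : Gamma1 (2 ^ s) ⧸ (Gamma (2 ^ (s + 1))).subgroupOf (Gamma1 (2 ^ s)) |
          ∃ g, x = g ^ 2}) :
    S.index = 4 ∧
    (∀ x : Gamma1 (2 ^ s) ⧸ (Gamma (2 ^ (s + 1))).subgroupOf (Gamma1 (2 ^ s)), x ^ 2 ∈ S) ∧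
    ((∃ hneg : (-1 : SL(2, ℤ)) ∈ Gamma1 (2 ^ s),
        (QuotientGroup.mk (⟨-1, hneg⟩ : Gamma1 (2 ^ s)) :
          Gamma1 (2 ^ s) ⧸ (Gamma (2 ^ (s + 1))).subgroupOf (Gamma1 (2 ^ s))) ∈ S) ↔ s = 1) := by
  subst hS
  have hN : 2 ∣ 2 ^ s := dvd_pow_self 2 (by omega)
  refine ⟨index_commutatorSquares hN, sq_mem_commutatorSquares,
    fun ⟨h, _⟩ => ?_, fun hs1 => ?_⟩
  · have h2 : 2 ^ s ∣ 2 ^ 1 := neg_one_mem_Gamma1_iff.mp h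
    exact le_antisymm ((Nat.pow_dvd_pow_iff_le_right (by norm_num)).mp h2) hs
  · subst hs1
    exact ⟨_, mk_neg_one_mem_commutatorSquares hN (neg_one_mem_Gamma1_iff.mpr dvd_rfl)⟩
end

section
/- Suppose Γ₂ ⊆ Γ₁ are finite-index subgroups of SL₂(ℤ), and suppose there exists a subgroup Δ₁ ≤ SL₂(ℤ) whose image in PSL₂(ℤ) equals the image of Γ₁ and such that Δ₁ is not a congruence subgroup. Then there exists a subgroup Δ₂ ≤ SL₂(ℤ) whose image in PSL₂(ℤ) equals the image of Γ₂ and which is not a congruence subgroup: namely, the preimage in Δ₁ of the image of Γ₂ in PSL₂(ℤ). -/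
open CongruenceSubgroup
open scoped MatrixGroups

theorem Subgroup.map_inf_comap {G N : Type*} [Group G] [Group N] (f : G →* N)
    (H : Subgroup G) (K : Subgroup N) : (H ⊓ K.comap f).map f = H.map f ⊓ K :=
  SetLike.coe_injective <| by
    simp only [Subgroup.coe_map, Subgroup.coe_inf, Subgroup.coe_comap, Set.image_inter_preimage]

theorem stmt_19_general (Γ₁ Γ₂ Δ₁ : Subgroup SL(2, ℤ))
    (h21 : Γ₂ ≤ Γ₁)
    (π : SL(2, ℤ) →* SL(2, ℤ) ⧸ Subgroup.center SL(2, ℤ))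
    (hΔ₁ : Δ₁.map π = Γ₁.map π)
    (hnc : ¬ IsCongruenceSubgroup Δ₁) :
    ∃ Δ₂ : Subgroup SL(2, ℤ),
      Δ₂ = Δ₁ ⊓ (Γ₂.map π).comap π ∧
      Δ₂.map π = Γ₂.map π ∧
      ¬ IsCongruenceSubgroup Δ₂ := by
  refine ⟨Δ₁ ⊓ (Γ₂.map π).comap π, rfl, ?_, ?_⟩
  · rw [Subgroup.map_inf_comap, hΔ₁]
    exact inf_eq_right.mpr (Subgroup.map_mono h21)
  · exact fun hcong => hnc (isCongruenceSubgroup_trans _ _ inf_le_left hcong)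

/-- If `Γ₂ ⊆ Γ₁` are finite-index subgroups of `SL₂(ℤ)` and `Δ₁` is a noncongruence lift
of the image of `Γ₁` in `PSL₂(ℤ)` (= `SL₂(ℤ)` modulo its center `{±I}`), then the preimage
in `Δ₁` of the image of `Γ₂` is a noncongruence lift of the image of `Γ₂`. -/
theorem stmt_19 (Γ₁ Γ₂ Δ₁ : Subgroup SL(2, ℤ))
    (h21 : Γ₂ ≤ Γ₁) (hfin1 : Γ₁.FiniteIndex) (hfin2 : Γ₂.FiniteIndex)
    (π : SL(2, ℤ) →* SL(2, ℤ) ⧸ Subgroup.center SL(2, ℤ))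
    (hπ : π = QuotientGroup.mk' (Subgroup.center SL(2, ℤ)))
    (hΔ₁ : Δ₁.map π = Γ₁.map π)
    (hnc : ¬ IsCongruenceSubgroup Δ₁) :
    ∃ Δ₂ : Subgroup SL(2, ℤ),
      Δ₂ = Δ₁ ⊓ (Γ₂.map π).comap π ∧
      Δ₂.map π = Γ₂.map π ∧
      ¬ IsCongruenceSubgroup Δ₂ :=
  stmt_19_general Γ₁ Γ₂ Δ₁ h21 π hΔ₁ hnc
end
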